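/- For all z₁, z₂, w ∈ ℂ, the chordal distance satisfies χ(z₁ + w, z₂ + w) ≤ (1/4)(|w| + √(4+|w|²))² · χ(z₁, z₂). -/

import Mathlib

open Filter Topology Metric Set MeasureTheory
open scoped Classical

noncomputable section

namespace PaperDyn

/-- `log⁺ x = max (log x) 0`. -/
def logPlus (x : ℝ) : ℝ := max (Real.log x) 0

/-- Multiplicity of `z` as an `a`-point of `f` (`0` if `z` is not an `a`-point). -/
def aPointMult (f : ℂ → ℂ) (a : ℂ) (z : ℂ) : ℕ :=
  if h : MeromorphicAt (fun w => f w - a) z then (WithTop.untopD 0 (meromorphicOrderAt (fun w => f w - a) z)).toNat else 0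

/-- Multiplicity of `z` as a pole of `f` (`0` if `z` is not a pole). -/
def poleMult (f : ℂ → ℂ) (z : ℂ) : ℕ :=
  if h : MeromorphicAt f z then (-(WithTop.untopD 0 (meromorphicOrderAt f z))).toNat else 0

/-- `z` is a pole of `f`. -/
def IsPole (f : ℂ → ℂ) (z : ℂ) : Prop :=
  Tendsto (fun w => ‖f w‖) (𝓝[≠] z) atTop

/-- Number of `a`-points of `f` in `S`, counted with multiplicity. -/
def countA (f : ℂ → ℂ) (a : ℂ) (S : Set ℂ) : ℕ := ∑ᶠ z ∈ S, aPointMult f a z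

/-- Number of poles of `f` in `S`, counted with multiplicity. -/
def countPoles (f : ℂ → ℂ) (S : Set ℂ) : ℕ := ∑ᶠ z ∈ S, poleMult f z

/-- Number of times `f` takes the (possibly infinite, `none = ∞`) value `a` on `S`. -/
def valueCount (f : ℂ → ℂ) (a : Option ℂ) (S : Set ℂ) : ℕ :=
  match a with
  | none => countPoles f S
  | some c => countA f c S

/-- The integrated counting function `N(r, Ω, f = a)` for a value `a` on the sphere. -/
def valueN (f : ℂ → ℂ) (a : Option ℂ) (Ω : Set ℂ) (r : ℝ) : ℝ :=
  ∫ t in (1:ℝ)..r, (valueCount f a (Ω ∩ Metric.ball 0 t) : ℝ) / t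

/-- `n(t, f)` : number of poles of `f` in `|z| ≤ t`, counted with multiplicity. -/
def nPoles (f : ℂ → ℂ) (t : ℝ) : ℕ := countPoles f (Metric.closedBall 0 t)

/-- The Nevanlinna proximity function `m(r,f)`. -/
def proximity (f : ℂ → ℂ) (r : ℝ) : ℝ :=
  (2 * Real.pi)⁻¹ * ∫ θ in (0:ℝ)..(2 * Real.pi),
    logPlus ‖f ((r : ℂ) * Complex.exp (θ * Complex.I))‖

/-- The integrated pole-counting function `N(r,f)`. -/
def nevN (f : ℂ → ℂ) (r : ℝ) : ℝ :=
  (∫ t in (0:ℝ)..r, ((nPoles f t : ℝ) - (nPoles f 0 : ℝ)) / t) + (nPoles f 0 : ℝ) * Real.log r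

/-- The Nevanlinna characteristic `T(r,f) = m(r,f) + N(r,f)`. -/
def nevT (f : ℂ → ℂ) (r : ℝ) : ℝ := proximity f r + nevN f r

/-- The growth order `ρ(f) = limsup_{r→∞} log T(r,f) / log r`, as an extended real. -/
def growthOrder (f : ℂ → ℂ) : EReal :=
  limsup (fun r : ℝ => ((Real.log (nevT f r) / Real.log r : ℝ) : EReal)) atTop

/-- The lower order `λ(f) = liminf_{r→∞} log T(r,f) / log r`, as an extended real. -/
def lowerOrder (f : ℂ → ℂ) : EReal :=
  liminf (fun r : ℝ => ((Real.log (nevT f r) / Real.log r : ℝ) : EReal)) atTop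

/-- The maximum modulus `M(r,f)`. -/
def maxModulus (f : ℂ → ℂ) (r : ℝ) : ℝ := sSup ((fun z => ‖f z‖) '' Metric.sphere (0:ℂ) r)

/-- The minimum modulus `L(r,f)`. -/
def minModulus (f : ℂ → ℂ) (r : ℝ) : ℝ := sInf ((fun z => ‖f z‖) '' Metric.sphere (0:ℂ) r)

/-- The Nevanlinna deficiency of `f` at `∞`. -/
def deltaInfty (f : ℂ → ℂ) : EReal :=
  liminf (fun r : ℝ => ((proximity f r / nevT f r : ℝ) : EReal)) atTop

/-- The Nevanlinna deficiency of `f` at a finite value `a`. -/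
def delta (a : ℂ) (f : ℂ → ℂ) : EReal := deltaInfty (fun z => (f z - a)⁻¹)

/-- A rational function. -/
def IsRationalFn (f : ℂ → ℂ) : Prop :=
  ∃ p q : Polynomial ℂ, q ≠ 0 ∧ ∀ z : ℂ, q.eval z ≠ 0 → f z = p.eval z / q.eval z

/-- A transcendental meromorphic function on `ℂ`. -/
def TranscendentalMeromorphic (f : ℂ → ℂ) : Prop :=
  MeromorphicOn f Set.univ ∧ ¬ IsRationalFn f

/-- A transcendental entire function. -/
def TranscendentalEntire (f : ℂ → ℂ) : Prop :=
  Differentiable ℂ f ∧ ¬ ∃ p : Polynomial ℂ, ∀ z, f z = p.eval z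

/-- The chordal (spherical) distance between two finite points. -/
def sphDistC (a b : ℂ) : ℝ :=
  dist a b / (Real.sqrt (1 + ‖a‖ ^ 2) * Real.sqrt (1 + ‖b‖ ^ 2))

/-- The chordal (spherical) distance on the Riemann sphere (`none = ∞`). -/
def sphDist : Option ℂ → Option ℂ → ℝ
  | some a, some b => sphDistC a b
  | some a, none => 1 / Real.sqrt (1 + ‖a‖ ^ 2)
  | none, some b => 1 / Real.sqrt (1 + ‖b‖ ^ 2)
  | none, none => 0

/-- The Fatou set of `f`: points having a neighbourhood on which all the iterates are
defined and form a normal (equicontinuous w.r.t. the spherical metric) family. -/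
def FatouSet (f : ℂ → ℂ) : Set ℂ :=
  {z | ∃ U ∈ 𝓝 z, (∀ (n : ℕ) (w : ℂ), w ∈ U → ¬ IsPole f (f^[n] w)) ∧
    ∀ ε > 0, ∃ δ > 0, ∀ (n : ℕ), ∀ w ∈ U, ∀ w' ∈ U, dist w w' < δ →
      sphDistC (f^[n] w) (f^[n] w') < ε}

/-- The Julia set of `f` (its part in the finite plane). -/
def JuliaSet (f : ℂ → ℂ) : Set ℂ := (FatouSet f)ᶜ

/-- The escaping set of `f`. -/
def EscapingSet (f : ℂ → ℂ) : Set ℂ :=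
  {z | (∀ n : ℕ, ¬ IsPole f (f^[n] z)) ∧ Tendsto (fun n => ‖f^[n] z‖) atTop atTop}

/-- The open angle `{z ≠ 0 : α < arg z < β}` (arguments understood modulo `2π`). -/
def AngSector (α β : ℝ) : Set ℂ :=
  {z | z ≠ 0 ∧ ∃ k : ℤ, α < Complex.arg z + 2 * Real.pi * k ∧
    Complex.arg z + 2 * Real.pi * k < β}

/-- `θ` is a limit point of the sequence of arguments `arg (f^[n] a)`. -/
def IsArgLimitPoint (f : ℂ → ℂ) (a : ℂ) (θ : ℝ) : Prop :=
  ∀ ε > 0, ∃ᶠ n in atTop, f^[n] a ∈ AngSector (θ - ε) (θ + ε)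

/-- `arg z = θ` is a Borel direction of order (at least) `ρ` of `f`. -/
def IsBorelDirection (f : ℂ → ℂ) (θ : ℝ) (ρ : ℝ) : Prop :=
  ∀ ε > 0, ∃ a₁ a₂ : Option ℂ, ∀ a : Option ℂ, a ≠ a₁ → a ≠ a₂ →
    (ρ : EReal) ≤ limsup (fun r : ℝ =>
      ((logPlus (valueN f a (AngSector (θ - ε) (θ + ε)) r) / Real.log r : ℝ) : EReal)) atTop

/-- `arg z = θ` is a Borel direction of infinite order of `f`. -/
def IsBorelDirectionInf (f : ℂ → ℂ) (θ : ℝ) : Prop :=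
  ∀ ε > 0, ∃ a₁ a₂ : Option ℂ, ∀ a : Option ℂ, a ≠ a₁ → a ≠ a₂ →
    limsup (fun r : ℝ =>
      ((logPlus (valueN f a (AngSector (θ - ε) (θ + ε)) r) / Real.log r : ℝ) : EReal)) atTop = ⊤

/-- The disk `|z - z₀| < ε|z₀|` is a filling disk of `f` with index `m` : `f` assumes on it
every spherical value at least `m` times, except possibly values lying in two spherical
disks of radius at most `e^{-m}`. -/
def IsFillingDisk (f : ℂ → ℂ) (z₀ : ℂ) (ε : ℝ) (m : ℝ) : Prop :=
  ∃ c₁ c₂ : Option ℂ, ∀ a : Option ℂ,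
    Real.exp (-m) < sphDist a c₁ → Real.exp (-m) < sphDist a c₂ →
      m ≤ (valueCount f a (Metric.ball z₀ (ε * ‖z₀‖)) : ℝ)

/-- The open round annulus `A(r,R) = {z : r < |z| < R}`. -/
def Annulus (r R : ℝ) : Set ℂ := {z | r < ‖z‖ ∧ ‖z‖ < R}

/-
The constant `c = (|w| + √(4 + |w|²)) / 2` is the positive root of `c² = 1 + |w| c`. With
`s = |z + w|` and `t = |w|` this gives `c (c² (1 + s²) - 1 - (s + t)²) = t (c s - 1)² ≥ 0`, so
`1 + |z|² ≤ 1 + (s + t)² ≤ c² (1 + |z + w|²)`. A translation preserves `|z₁ - z₂|`, and each of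
the two factors in the denominator of `χ` grows by at most the factor `c`.
-/

theorem one_add_add_sq_le_mul_one_add_sq {c t : ℝ} (s : ℝ) (hc : 0 < c) (ht : 0 ≤ t)
    (hct : c ^ 2 = 1 + t * c) : 1 + (s + t) ^ 2 ≤ c ^ 2 * (1 + s ^ 2) := by
  have key : c * (c ^ 2 * (1 + s ^ 2) - (1 + (s + t) ^ 2)) = t * (c * s - 1) ^ 2 := by
    linear_combination (c * s ^ 2 + c + t) * hct
  exact sub_nonneg.mp (nonneg_of_mul_nonneg_right (key ▸ by positivity) hc)

theorem sq_half_add_sqrt_four_add_sq (t : ℝ) :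
    ((t + √(4 + t ^ 2)) / 2) ^ 2 = 1 + t * ((t + √(4 + t ^ 2)) / 2) := by
  have hu : √(4 + t ^ 2) ^ 2 = 4 + t ^ 2 := Real.sq_sqrt (by positivity)
  linear_combination hu / 4

theorem sqrt_one_add_norm_sq_le {E : Type*} [SeminormedAddCommGroup E] (z w : E) :
    √(1 + ‖z‖ ^ 2) ≤ (‖w‖ + √(4 + ‖w‖ ^ 2)) / 2 * √(1 + ‖z + w‖ ^ 2) := by
  set c := (‖w‖ + √(4 + ‖w‖ ^ 2)) / 2
  have hc : 0 < c := by positivity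
  have hz : ‖z‖ ≤ ‖z + w‖ + ‖w‖ := by
    simpa using norm_sub_le (z + w) w
  calc √(1 + ‖z‖ ^ 2) ≤ √(1 + (‖z + w‖ + ‖w‖) ^ 2) := by gcongr
    _ ≤ √(c ^ 2 * (1 + ‖z + w‖ ^ 2)) := by
      gcongr
      exact one_add_add_sq_le_mul_one_add_sq _ hc (norm_nonneg w)
        (sq_half_add_sqrt_four_add_sq ‖w‖)
    _ = c * √(1 + ‖z + w‖ ^ 2) := by
      rw [Real.sqrt_mul (sq_nonneg c), Real.sqrt_sq hc.le]

/-- effect of a translation on the chordal distance. -/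
theorem chordal_dist_translate (z₁ z₂ w : ℂ) :
    sphDistC (z₁ + w) (z₂ + w) ≤
      (1 / 4) * (‖w‖ + Real.sqrt (4 + ‖w‖ ^ 2)) ^ 2 * sphDistC z₁ z₂ := by
  set c := (‖w‖ + √(4 + ‖w‖ ^ 2)) / 2
  have hconst : (1 / 4) * (‖w‖ + √(4 + ‖w‖ ^ 2)) ^ 2 = c * c := by ring
  have hden : √(1 + ‖z₁‖ ^ 2) * √(1 + ‖z₂‖ ^ 2) ≤
      c * c * (√(1 + ‖z₁ + w‖ ^ 2) * √(1 + ‖z₂ + w‖ ^ 2)) := by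
    rw [mul_mul_mul_comm]
    exact mul_le_mul (sqrt_one_add_norm_sq_le z₁ w) (sqrt_one_add_norm_sq_le z₂ w)
      (by positivity) (by positivity)
  calc sphDistC (z₁ + w) (z₂ + w)
      = c * c * dist z₁ z₂ / (c * c * (√(1 + ‖z₁ + w‖ ^ 2) * √(1 + ‖z₂ + w‖ ^ 2))) := by
        rw [sphDistC, dist_add_right, mul_div_mul_left _ _ (by positivity)]
    _ ≤ c * c * dist z₁ z₂ / (√(1 + ‖z₁‖ ^ 2) * √(1 + ‖z₂‖ ^ 2)) :=
        div_le_div_of_nonneg_left (by positivity) (by positivity) hden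
    _ = (1 / 4) * (‖w‖ + √(4 + ‖w‖ ^ 2)) ^ 2 * sphDistC z₁ z₂ := by
        rw [hconst, sphDistC, mul_div_assoc]

end PaperDyn
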